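/- Let f, L, τ̃^f, and τ^f be as in the context. Then the computationally efficient approximation τ^f_approx := (L/M)∫_I f(τ) dτ is a lower bound for the objective forward CIR length: τ^f_approx ≤ τ^f. -/
import Mathlib


open MeasureTheory Set

/-- Equation (2.13) (inequality): the computationally efficient approximation
`τ^f_approx := (L/M) ∫_I f` is a lower bound for the objective forward CIR length
`τ^f := (1/M) ∫_0^M τ̃^f(ε) dε`, where `τ̃^f(ε) := L ⬝ sup {τ ∈ I : f τ > ε}` is the
subjective forward CIR length (with the convention that it vanishes when the superlevel
set is empty — in Lean, `sSup ∅ = 0` for real sets, so this convention is automatic),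
`f` is the forward CIR metric on `I = [0,1]` (bounded, measurable, nonnegative), and
`M = sup_I f > 0`. -/
theorem forward_CIR_approx_lower_bound
    (f : ℝ → ℝ) (hf_meas : Measurable f)
    (hf_nonneg : ∀ τ ∈ Icc (0:ℝ) 1, 0 ≤ f τ)
    (hf_bdd : BddAbove (f '' Icc (0:ℝ) 1))
    (M : ℝ) (hM : M = sSup (f '' Icc (0:ℝ) 1)) (hM_pos : 0 < M)
    (L : ℝ) (hL : 0 < L)
    (τf_subj : ℝ → ℝ)
    (hτf_subj : ∀ ε : ℝ, τf_subj ε = L * sSup {τ ∈ Icc (0:ℝ) 1 | ε < f τ})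
    (τf_obj : ℝ) (hτf_obj : τf_obj = (1 / M) * ∫ ε in (0:ℝ)..M, τf_subj ε) :
    (L / M) * (∫ τ in Icc (0:ℝ) 1, f τ) ≤ τf_obj := by
  set μ : Measure ℝ := volume.restrict (Icc (0:ℝ) 1) with hμ
  have hfM : ∀ τ ∈ Icc (0:ℝ) 1, f τ ≤ M := fun τ hτ => by
    rw [hM]; exact le_csSup hf_bdd (mem_image_of_mem f hτ)
  -- s is the sup function
  set s : ℝ → ℝ := fun ε => sSup {τ ∈ Icc (0:ℝ) 1 | ε < f τ} with hs
  have hs_bdd : ∀ ε, BddAbove {τ ∈ Icc (0:ℝ) 1 | ε < f τ} := fun ε =>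
    (bddAbove_Icc).mono (fun τ hτ => hτ.1)
  have hs_nonneg : ∀ ε, 0 ≤ s ε := by
    intro ε
    rcases eq_or_ne {τ ∈ Icc (0:ℝ) 1 | ε < f τ} ∅ with h | h
    · show (0:ℝ) ≤ sSup {τ ∈ Icc (0:ℝ) 1 | ε < f τ}
      rw [h, Real.sSup_empty]
    · obtain ⟨τ, hτ⟩ := nonempty_iff_ne_empty.mpr h
      exact le_trans hτ.1.1 (le_csSup (hs_bdd ε) hτ)
  have hs_anti : Antitone s := by
    intro a b hab
    rcases eq_or_ne {τ ∈ Icc (0:ℝ) 1 | b < f τ} ∅ with h | h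
    · rw [hs]; simp only [h, Real.sSup_empty]; exact hs_nonneg a
    · exact csSup_le_csSup (hs_bdd a) (nonempty_iff_ne_empty.mpr h)
        (fun τ hτ => ⟨hτ.1, lt_of_le_of_lt hab hτ.2⟩)
  -- integrability of f on Icc
  have hf_int : IntegrableOn f (Icc (0:ℝ) 1) volume := by
    apply Measure.integrableOn_of_bounded (M := M)
      (by simp) hf_meas.aestronglyMeasurable
    filter_upwards [ae_restrict_mem measurableSet_Icc] with τ hτ
    rw [Real.norm_eq_abs, abs_le]
    exact ⟨le_trans (by linarith) (hf_nonneg τ hτ), hfM τ hτ⟩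
  have hf_nn_ae : 0 ≤ᵐ[μ] f := by
    filter_upwards [ae_restrict_mem measurableSet_Icc] with τ hτ using hf_nonneg τ hτ
  have hf_bdd_ae : f ≤ᵐ[μ] fun _ => M := by
    filter_upwards [ae_restrict_mem measurableSet_Icc] with τ hτ using hfM τ hτ
  -- layer cake
  have layer : ∫ τ in Icc (0:ℝ) 1, f τ
      = ∫ t in Ioc (0:ℝ) M, ENNReal.toReal (μ {a | t ≤ f a}) :=
    hf_int.integral_eq_integral_Ioc_meas_le hf_nn_ae hf_bdd_ae
  -- replace ≤ by <
  have layer' : ∫ τ in Icc (0:ℝ) 1, f τ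
      = ∫ t in Ioc (0:ℝ) M, ENNReal.toReal (μ {a | t < f a}) := by
    rw [layer]
    apply integral_congr_ae
    filter_upwards [meas_le_ae_eq_meas_lt μ (volume.restrict (Ioc 0 M)) f] with t ht
    rw [ht]
  -- pointwise bound toReal μ {t < f} ≤ s t
  have hpt : ∀ t, ENNReal.toReal (μ {a | t < f a}) ≤ s t := by
    intro t
    have hμset : μ {a | t < f a} = volume ({a | t < f a} ∩ Icc (0:ℝ) 1) :=
      Measure.restrict_apply (hf_meas measurableSet_Ioi)
    have hsub : {a | t < f a} ∩ Icc (0:ℝ) 1 ⊆ Icc 0 (s t) := by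
      rintro a ⟨ha, haI⟩
      exact ⟨haI.1, le_csSup (hs_bdd t) ⟨haI, ha⟩⟩
    calc ENNReal.toReal (μ {a | t < f a})
        ≤ ENNReal.toReal (volume (Icc 0 (s t))) := by
          rw [hμset]
          exact ENNReal.toReal_mono (by simp) (measure_mono hsub)
      _ = s t := by
          rw [Real.volume_Icc, ENNReal.toReal_ofReal (by linarith [hs_nonneg t])]
          ring
  -- integrability of both on Ioc 0 M
  have hs_int : IntegrableOn s (Ioc (0:ℝ) M) volume := by
    have := (hs_anti.antitoneOn (uIcc (0:ℝ) M)).intervalIntegrable (μ := volume)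
    rwa [intervalIntegrable_iff_integrableOn_Ioc_of_le hM_pos.le] at this
  have hg_anti : Antitone (fun t => ENNReal.toReal (μ {a | t < f a})) := by
    intro a b hab
    apply ENNReal.toReal_mono
    · exact ((measure_mono (subset_univ _)).trans_lt (by simp [hμ])).ne
    · exact measure_mono fun x hx => lt_of_le_of_lt hab hx
  have hg_int : IntegrableOn (fun t => ENNReal.toReal (μ {a | t < f a})) (Ioc (0:ℝ) M) volume := by
    have := (hg_anti.antitoneOn (uIcc (0:ℝ) M)).intervalIntegrable (μ := volume)
    rwa [intervalIntegrable_iff_integrableOn_Ioc_of_le hM_pos.le] at this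
  -- the key inequality
  have key : ∫ τ in Icc (0:ℝ) 1, f τ ≤ ∫ t in Ioc (0:ℝ) M, s t := by
    rw [layer']
    exact setIntegral_mono_on hg_int hs_int measurableSet_Ioc (fun t _ => hpt t)
  -- compute ∫_0..M τf_subj
  have hsubj_int : ∫ ε in (0:ℝ)..M, τf_subj ε = L * ∫ t in Ioc (0:ℝ) M, s t := by
    rw [intervalIntegral.integral_of_le hM_pos.le]
    rw [show τf_subj = fun ε => L * s ε from funext hτf_subj]
    exact integral_const_mul L s
  rw [hτf_obj, hsubj_int]
  have h1 : (L / M) * (∫ τ in Icc (0:ℝ) 1, f τ) ≤ (L / M) * ∫ t in Ioc (0:ℝ) M, s t :=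
    mul_le_mul_of_nonneg_left key (by positivity)
  calc (L / M) * (∫ τ in Icc (0:ℝ) 1, f τ) ≤ (L / M) * ∫ t in Ioc (0:ℝ) M, s t := h1
    _ = 1 / M * (L * ∫ t in Ioc (0:ℝ) M, s t) := by ring
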